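/- Let M₁ be a finite von Neumann algebra with trace τ, P a projection with τ(P) = 1/2, and T ∈ M₁ with ‖T‖ ≤ 1 written as a 2×2 operator matrix [[T₁₁, T₁₂],[T₂₁, T₂₂]] with respect to I = P + (I−P), where ‖T₂₁‖₂ < δ. Suppose Q ≥ I−P is a projection with ‖T₂₁Q‖ ≤ ε₁ and τ(I−Q) < ε₁²/δ². Write Q = P₁' + (I−P) with P₁' ≤ P, and set R = T₁₁P₁' + T₁₂ + T₂₂ (upper-triangular compression). Then ‖R‖ ≤ 1 + ε₁ and ‖R − T‖₂ ≤ ε₁/δ + δ, so S = (1+ε₁)^{-1}R satisfies ‖S‖ ≤ 1, SP = PSP, and ‖S − T‖₂ ≤ ε₁ + ε₁/δ + δ. -/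

import Mathlib

open scoped ComplexOrder

variable {H : Type*} [NormedAddCommGroup H] [InnerProductSpace ℂ H] [CompleteSpace H]

/-- The orthogonal projection (as an operator on `H`) onto a closed submodule. -/
noncomputable def projOnto (K : Submodule ℂ H) (hK : IsClosed (K : Set H)) : H →L[ℂ] H :=
  haveI : CompleteSpace K := hK.completeSpace_coe
  K.subtypeL ∘L K.orthogonalProjectionOnto

/-- `N(T)`: the projection onto the kernel of `T`. -/
noncomputable def kerProj (T : H →L[ℂ] H) : H →L[ℂ] H :=
  projOnto (LinearMap.ker (T : H →ₗ[ℂ] H)) (ContinuousLinearMap.isClosed_ker T)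

/-- `R(T)`: the projection onto the closure of the range of `T`. -/
noncomputable def rangeProj (T : H →L[ℂ] H) : H →L[ℂ] H :=
  projOnto (LinearMap.range (T : H →ₗ[ℂ] H)).topologicalClosure (Submodule.isClosed_topologicalClosure _)

/-- A (self-adjoint, idempotent) projection operator. -/
def IsProjection (p : H →L[ℂ] H) : Prop := IsSelfAdjoint p ∧ p * p = p

/-- `τ` is a faithful tracial state on the von Neumann algebra `M`. -/
structure IsFiniteTrace (M : VonNeumannAlgebra H) (τ : (H →L[ℂ] H) → ℂ) : Prop where
  map_one : τ 1 = 1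
  map_add : ∀ x y, τ (x + y) = τ x + τ y
  map_smul : ∀ (c : ℂ) (x : H →L[ℂ] H), τ (c • x) = c * τ x
  tracial : ∀ x ∈ M, ∀ y ∈ M, τ (x * y) = τ (y * x)
  nonneg : ∀ x ∈ M, 0 ≤ τ (star x * x)
  faithful : ∀ x ∈ M, τ (star x * x) = 0 → x = 0

/-- The trace 2-norm `‖x‖₂ = τ(x*x)^{1/2}`. -/
noncomputable def norm2 (τ : (H →L[ℂ] H) → ℂ) (x : H →L[ℂ] H) : ℝ :=
  Real.sqrt (τ (star x * x)).re

/-- `M` is a type II₁ factor with faithful normal tracial state `τ`: a factor whose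
trace takes a continuum of values on subprojections of any projection. -/
structure IsTypeII1Factor (M : VonNeumannAlgebra H) (τ : (H →L[ℂ] H) → ℂ) : Prop where
  trace : IsFiniteTrace M τ
  factor : ∀ z ∈ M, (∀ x ∈ M, z * x = x * z) → ∃ c : ℂ, z = c • (1 : H →L[ℂ] H)
  diffuse : ∀ p ∈ M, IsProjection p → ∀ t : ℝ, 0 ≤ t → t ≤ (τ p).re →
    ∃ q ∈ M, IsProjection q ∧ q * p = q ∧ τ q = (t : ℂ)

/-!
Since `P(1 - P) = 0` and `(1 - P)Q = 1 - P`, the compression is `R = TQ - T₂₁Q`, so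
`‖R‖ ≤ ‖T‖‖Q‖ + ‖T₂₁Q‖`, and `R - T = -(T₁₁(1 - Q) + T₂₁)`, so
`‖R - T‖₂ ≤ ‖T₁₁‖ τ(1 - Q)^{1/2} + ‖T₂₁‖₂`. Rescaling by `(1 + ε₁)⁻¹` moves `R` by at most
`ε₁` in `‖·‖₂ ≤ ‖·‖`, and `SP = PSP` because the `(1 - P)·P` corner of `R` vanishes.
-/

section Compression

variable {A : Type*} [Ring A]

/-- `T₁₁P₁' + T₁₂ + T₂₂` in the notation `T_{ij} = P_i T P_j`, `P₁ = P`, `P₂ = 1 - P`,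
`P₁' = Q - (1 - P)`. -/
def upperCompression (P Q T : A) : A :=
  P * T * P * (Q - (1 - P)) + P * T * (1 - P) + (1 - P) * T * (1 - P)

variable {P Q : A} (T : A)

theorem upperCompression_eq_add (hP : IsIdempotentElem P) :
    upperCompression P Q T = P * T * P * Q + P * T * (1 - P) + (1 - P) * T * (1 - P) := by
  rw [upperCompression, mul_sub, mul_assoc (P * T) P (1 - P), hP.mul_one_sub_self, mul_zero,
    sub_zero]

theorem upperCompression_eq_sub (hP : IsIdempotentElem P) (hQ : (1 - P) * Q = 1 - P) :
    upperCompression P Q T = T * Q - (1 - P) * T * P * Q := by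
  calc upperCompression P Q T
      = P * T * P * Q + P * T * ((1 - P) * Q) + (1 - P) * T * ((1 - P) * Q) := by
        rw [upperCompression_eq_add T hP, hQ]
    _ = T * Q - (1 - P) * T * P * Q := by noncomm_ring

theorem upperCompression_sub_self (hP : IsIdempotentElem P) :
    upperCompression P Q T - T = -(P * T * P * (1 - Q) + (1 - P) * T * P) := by
  rw [upperCompression_eq_add T hP]; noncomm_ring

theorem upperCompression_mul_eq (hP : IsIdempotentElem P) :
    upperCompression P Q T * P = P * upperCompression P Q T * P := by
  have hRP : upperCompression P Q T * P = P * T * P * Q * P := by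
    simp only [upperCompression_eq_add T hP, add_mul, mul_assoc, hP.one_sub_mul_self,
      mul_zero, add_zero]
  rw [mul_assoc P, hRP]
  simp only [← mul_assoc, hP.eq]

theorem upperCompression_mem {S : Type*} [SetLike S A] [SubringClass S A] {s : S} (hP : P ∈ s)
    (hQ : Q ∈ s) (hT : T ∈ s) : upperCompression P Q T ∈ s := by
  have hP' : 1 - P ∈ s := sub_mem (one_mem s) hP
  exact add_mem (add_mem (mul_mem (mul_mem (mul_mem hP hT) hP) (sub_mem hQ hP'))
    (mul_mem (mul_mem hP hT) hP')) (mul_mem (mul_mem hP' hT) hP')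

end Compression

theorem norm_upperCompression_le {A : Type*} [NormedRing A] [StarRing A] [CStarRing A]
    {P Q T : A} (hP : IsIdempotentElem P) (hQ : IsStarProjection Q) (hPQ : (1 - P) * Q = 1 - P)
    (hT : ‖T‖ ≤ 1) : ‖upperCompression P Q T‖ ≤ 1 + ‖(1 - P) * T * P * Q‖ := by
  rw [upperCompression_eq_sub T hP hPQ]
  calc ‖T * Q - (1 - P) * T * P * Q‖ ≤ ‖T * Q‖ + ‖(1 - P) * T * P * Q‖ := norm_sub_le _ _
    _ ≤ 1 * 1 + ‖(1 - P) * T * P * Q‖ := by gcongr; exact norm_mul_le_of_le hT hQ.norm_le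
    _ = 1 + ‖(1 - P) * T * P * Q‖ := by rw [one_mul]

namespace VonNeumannAlgebra

variable (M : VonNeumannAlgebra H)

theorem isClosed : IsClosed (M : Set (H →L[ℂ] H)) := by
  rw [← M.centralizer_centralizer]
  exact Set.isClosed_centralizer _

variable {M}

theorem real_smul_mem (r : ℝ) {x : H →L[ℂ] H} (hx : x ∈ M) : r • x ∈ M := by
  rw [← Complex.coe_smul]
  exact M.toStarSubalgebra.smul_mem hx _

theorem exists_star_mul_self_eq {a : H →L[ℂ] H} (ha : a ∈ M) (ha₀ : 0 ≤ a) :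
    ∃ s ∈ M, star s * s = a := by
  have : IsClosed (M.toStarSubalgebra : Set (H →L[ℂ] H)) := M.isClosed
  refine ⟨CFC.sqrt a, ?_, ?_⟩
  · rw [CFC.sqrt_eq_real_sqrt a ha₀]
    exact cfcₙ_mem (s := M.toStarSubalgebra) (𝕜' := ℂ) _ ha
  · rw [(CFC.sqrt_nonneg a).star_eq, CFC.sqrt_mul_sqrt_self a ha₀]

end VonNeumannAlgebra

theorem norm2_nonneg (τ : (H →L[ℂ] H) → ℂ) (x : H →L[ℂ] H) : 0 ≤ norm2 τ x :=
  Real.sqrt_nonneg _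

theorem norm2_neg (τ : (H →L[ℂ] H) → ℂ) (x : H →L[ℂ] H) : norm2 τ (-x) = norm2 τ x := by
  simp [norm2]

theorem IsProjection.isStarProjection {p : H →L[ℂ] H} (hp : IsProjection p) :
    IsStarProjection p :=
  ⟨hp.2, hp.1⟩

theorem norm2_of_isStarProjection (τ : (H →L[ℂ] H) → ℂ) {p : H →L[ℂ] H}
    (hp : IsStarProjection p) : norm2 τ p = √(τ p).re := by
  rw [norm2, hp.isSelfAdjoint.star_eq, hp.isIdempotentElem.eq]

namespace IsFiniteTrace

variable {M : VonNeumannAlgebra H} {τ : (H →L[ℂ] H) → ℂ} (hτ : IsFiniteTrace M τ)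
include hτ

theorem map_sub (x y : H →L[ℂ] H) : τ (x - y) = τ x - τ y := by
  rw [sub_eq_add_neg, ← neg_one_smul ℂ y, hτ.map_add, hτ.map_smul]
  ring

theorem map_real_smul (r : ℝ) (x : H →L[ℂ] H) : τ (r • x) = r * τ x := by
  rw [← Complex.coe_smul, hτ.map_smul]

theorem re_nonneg {x : H →L[ℂ] H} (hx : x ∈ M) : 0 ≤ (τ (star x * x)).re :=
  (Complex.nonneg_iff.mp (hτ.nonneg x hx)).1

theorem norm2_sq {x : H →L[ℂ] H} (hx : x ∈ M) : norm2 τ x ^ 2 = (τ (star x * x)).re :=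
  Real.sq_sqrt (hτ.re_nonneg hx)

theorem norm2_real_smul (r : ℝ) (x : H →L[ℂ] H) : norm2 τ (r • x) = |r| * norm2 τ x := by
  have : star (r • x) * (r • x) = (r * r) • (star x * x) := by
    rw [star_smul, star_trivial, smul_mul_smul_comm]
  rw [norm2, norm2, this, hτ.map_real_smul, Complex.re_ofReal_mul,
    Real.sqrt_mul (mul_self_nonneg r), Real.sqrt_mul_self_eq_abs]

/-- The quadratic `t ↦ ‖t • x + y‖₂²` is nonnegative, so its discriminant is nonpositive. -/
theorem norm2_add_le {x y : H →L[ℂ] H} (hx : x ∈ M) (hy : y ∈ M) :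
    norm2 τ (x + y) ≤ norm2 τ x + norm2 τ y := by
  set b := (τ (star x * y)).re + (τ (star y * x)).re
  have hquad : ∀ t : ℝ, (τ (star (t • x + y) * (t • x + y))).re =
      norm2 τ x ^ 2 * (t * t) + b * t + norm2 τ y ^ 2 := by
    intro t
    have : star (t • x + y) * (t • x + y) =
        (t * t) • (star x * x) + t • (star x * y + star y * x) + star y * y := by
      simp only [star_add, star_smul, star_trivial, add_mul, mul_add, smul_mul_assoc,
        mul_smul_comm]
      module
    rw [this, hτ.map_add, hτ.map_add, hτ.map_real_smul, hτ.map_real_smul, hτ.map_add,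
      hτ.norm2_sq hx, hτ.norm2_sq hy]
    simp only [Complex.add_re, Complex.re_ofReal_mul]
    ring
  have hdisc := discrim_le_zero fun t ↦
    hquad t ▸ hτ.re_nonneg (add_mem (VonNeumannAlgebra.real_smul_mem t hx) hy)
  have hxy := mul_nonneg (norm2_nonneg τ x) (norm2_nonneg τ y)
  have hb : b ≤ 2 * (norm2 τ x * norm2 τ y) :=
    (abs_le_of_sq_le_sq' (by rw [discrim] at hdisc; linarith) (by positivity)).2
  calc norm2 τ (x + y) = √(norm2 τ x ^ 2 + b + norm2 τ y ^ 2) := by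
        have h₁ := hquad 1
        rw [one_smul, mul_one, mul_one, mul_one] at h₁
        rw [norm2, h₁]
    _ ≤ √((norm2 τ x + norm2 τ y) ^ 2) := Real.sqrt_le_sqrt (by nlinarith)
    _ = norm2 τ x + norm2 τ y :=
      Real.sqrt_sq (add_nonneg (norm2_nonneg τ x) (norm2_nonneg τ y))

/-- `‖x‖² - x⋆x ≥ 0` is `s⋆s` for some `s ∈ M`, and `τ((sy)⋆(sy)) ≥ 0` rearranges to the claim. -/
theorem norm2_mul_le {x y : H →L[ℂ] H} (hx : x ∈ M) (hy : y ∈ M) :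
    norm2 τ (x * y) ≤ ‖x‖ * norm2 τ y := by
  have hd : star x * x ≤ algebraMap ℝ _ (‖x‖ * ‖x‖) := by
    rw [← CStarRing.norm_star_mul_self]
    exact (IsSelfAdjoint.star_mul_self x).le_algebraMap_norm_self
  have hdM : algebraMap ℝ _ (‖x‖ * ‖x‖) - star x * x ∈ M := by
    rw [Algebra.algebraMap_eq_smul_one]
    exact sub_mem (VonNeumannAlgebra.real_smul_mem _ (one_mem M.toStarSubalgebra))
      (mul_mem (star_mem hx) hx)
  obtain ⟨s, hs, hss⟩ := VonNeumannAlgebra.exists_star_mul_self_eq hdM (sub_nonneg.mpr hd)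
  have hsy :
      star (s * y) * (s * y) = (‖x‖ * ‖x‖) • (star y * y) - star (x * y) * (x * y) := by
    rw [star_mul, mul_assoc, ← mul_assoc (star s), hss, Algebra.algebraMap_eq_smul_one,
      star_mul]
    simp only [sub_mul, mul_sub, smul_mul_assoc, one_mul, mul_smul_comm, mul_assoc]
  have h := hτ.re_nonneg (mul_mem hs hy)
  rw [hsy, hτ.map_sub, hτ.map_real_smul, Complex.sub_re, Complex.re_ofReal_mul, sub_nonneg]
    at h
  calc norm2 τ (x * y) ≤ √((‖x‖ * ‖x‖) * (τ (star y * y)).re) := Real.sqrt_le_sqrt h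
    _ = ‖x‖ * norm2 τ y := by
      rw [Real.sqrt_mul (mul_self_nonneg _), Real.sqrt_mul_self (norm_nonneg x), norm2]

theorem norm2_le_norm {x : H →L[ℂ] H} (hx : x ∈ M) : norm2 τ x ≤ ‖x‖ := by
  have h := hτ.norm2_mul_le hx (one_mem M.toStarSubalgebra)
  have h₁ : norm2 τ 1 = 1 := by
    rw [norm2, star_one, mul_one, hτ.map_one, Complex.one_re, Real.sqrt_one]
  rwa [mul_one, h₁, mul_one] at h

theorem norm2_inv_smul_sub_le {R T : H →L[ℂ] H} (hR : R ∈ M) (hT : T ∈ M) {ε : ℝ}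
    (hε : 0 ≤ ε) (hRε : ‖R‖ ≤ 1 + ε) :
    norm2 τ ((1 + ε)⁻¹ • R - T) ≤ ε + norm2 τ (R - T) := by
  have hdecomp : (1 + ε)⁻¹ • R - T = ((1 + ε)⁻¹ - 1) • R + (R - T) := by module
  have hcoeff : |(1 + ε)⁻¹ - 1| * (1 + ε) = ε := by
    rw [abs_of_nonpos (sub_nonpos.mpr (inv_le_one_of_one_le₀ (by linarith)))]
    field_simp
    ring
  have hscaled : norm2 τ (((1 + ε)⁻¹ - 1) • R) ≤ ε := by
    rw [hτ.norm2_real_smul]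
    calc _ ≤ |(1 + ε)⁻¹ - 1| * (1 + ε) :=
          mul_le_mul_of_nonneg_left ((hτ.norm2_le_norm hR).trans hRε) (abs_nonneg _)
      _ = ε := hcoeff
  rw [hdecomp]
  exact (hτ.norm2_add_le (VonNeumannAlgebra.real_smul_mem _ hR) (sub_mem hR hT)).trans
    (add_le_add_left hscaled _)

theorem norm2_upperCompression_sub_le {P Q T : H →L[ℂ] H} (hP : P ∈ M) (hPp : IsStarProjection P)
    (hQ : Q ∈ M) (hT : T ∈ M) (hT1 : ‖T‖ ≤ 1) :
    norm2 τ (upperCompression P Q T - T) ≤ norm2 τ (1 - Q) + norm2 τ ((1 - P) * T * P) := by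
  have h1 : (1 : H →L[ℂ] H) ∈ M := one_mem M.toStarSubalgebra
  have hT₁₁ : P * T * P ∈ M := mul_mem (mul_mem hP hT) hP
  have hT₁₁_norm : ‖P * T * P‖ ≤ 1 :=
    norm_mul₃_le.trans (mul_le_one₀ (mul_le_one₀ hPp.norm_le (norm_nonneg T) hT1)
      (norm_nonneg P) hPp.norm_le)
  rw [upperCompression_sub_self T hPp.isIdempotentElem, norm2_neg]
  calc _ ≤ norm2 τ (P * T * P * (1 - Q)) + norm2 τ ((1 - P) * T * P) :=
        hτ.norm2_add_le (mul_mem hT₁₁ (sub_mem h1 hQ)) (mul_mem (mul_mem (sub_mem h1 hP) hT) hP)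
    _ ≤ 1 * norm2 τ (1 - Q) + norm2 τ ((1 - P) * T * P) := by
        gcongr
        exact (hτ.norm2_mul_le hT₁₁ (sub_mem h1 hQ)).trans
          (mul_le_mul_of_nonneg_right hT₁₁_norm (norm2_nonneg _ _))
    _ = norm2 τ (1 - Q) + norm2 τ ((1 - P) * T * P) := by rw [one_mul]

end IsFiniteTrace

theorem stmt_19_general {H : Type*} [NormedAddCommGroup H] [InnerProductSpace ℂ H] [CompleteSpace H]
    (M₁ : VonNeumannAlgebra H) (τ : (H →L[ℂ] H) → ℂ) (hτ : IsFiniteTrace M₁ τ)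
    (P : H →L[ℂ] H) (hP : P ∈ M₁) (hPproj : IsProjection P)
    (T : H →L[ℂ] H) (hT : T ∈ M₁) (hT1 : ‖T‖ ≤ 1)
    (δ ε₁ : ℝ) (hδ : 0 < δ) (hε₁ : 0 < ε₁)
    (h21 : norm2 τ ((1 - P) * T * P) < δ)
    (Q : H →L[ℂ] H) (hQ : Q ∈ M₁) (hQproj : IsProjection Q)
    (hQge : Q * (1 - P) = 1 - P)
    (hQnorm : ‖((1 - P) * T * P) * Q‖ ≤ ε₁)
    (hQtr : (τ (1 - Q)).re < ε₁ ^ 2 / δ ^ 2) :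
    ‖(P * T * P) * (Q - (1 - P)) + P * T * (1 - P) + (1 - P) * T * (1 - P)‖ ≤ 1 + ε₁ ∧
    norm2 τ (((P * T * P) * (Q - (1 - P)) + P * T * (1 - P) + (1 - P) * T * (1 - P)) - T)
      ≤ ε₁ / δ + δ ∧
    (‖(1 + ε₁)⁻¹ •
        ((P * T * P) * (Q - (1 - P)) + P * T * (1 - P) + (1 - P) * T * (1 - P))‖ ≤ 1 ∧
      ((1 + ε₁)⁻¹ •
          ((P * T * P) * (Q - (1 - P)) + P * T * (1 - P) + (1 - P) * T * (1 - P))) * P =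
        P * ((1 + ε₁)⁻¹ •
          ((P * T * P) * (Q - (1 - P)) + P * T * (1 - P) + (1 - P) * T * (1 - P))) * P ∧
      norm2 τ ((1 + ε₁)⁻¹ •
          ((P * T * P) * (Q - (1 - P)) + P * T * (1 - P) + (1 - P) * T * (1 - P)) - T)
        ≤ ε₁ + ε₁ / δ + δ) := by
  have hPp := hPproj.isStarProjection
  have hQp := hQproj.isStarProjection
  have hPQ : (1 - P) * Q = 1 - P := by
    simpa [star_mul, hPp.isSelfAdjoint.star_eq, hQp.isSelfAdjoint.star_eq] using
      congrArg star hQge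
  rw [show P * T * P * (Q - (1 - P)) + P * T * (1 - P) + (1 - P) * T * (1 - P) =
    upperCompression P Q T from rfl]
  have hR : ‖upperCompression P Q T‖ ≤ 1 + ε₁ :=
    (norm_upperCompression_le hPp.isIdempotentElem hQp hPQ hT1).trans (by linarith)
  have h1Q : norm2 τ (1 - Q) ≤ ε₁ / δ := by
    rw [norm2_of_isStarProjection τ hQp.one_sub, Real.sqrt_le_iff, div_pow]
    exact ⟨div_nonneg hε₁.le hδ.le, hQtr.le⟩
  have hRT : norm2 τ (upperCompression P Q T - T) ≤ ε₁ / δ + δ :=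
    (hτ.norm2_upperCompression_sub_le hP hPp hQ hT hT1).trans (add_le_add h1Q h21.le)
  refine ⟨hR, hRT, ?_, ?_, ?_⟩
  · rw [norm_smul, Real.norm_of_nonneg (by positivity), inv_mul_le_one₀ (by positivity)]
    exact hR
  · rw [smul_mul_assoc, mul_smul_comm, smul_mul_assoc,
      upperCompression_mul_eq T hPp.isIdempotentElem]
  · have hRM := upperCompression_mem (s := M₁.toStarSubalgebra) T hP hQ hT
    exact (hτ.norm2_inv_smul_sub_le hRM hT hε₁.le hR).trans (by linarith)

/-- The key perturbation estimate in the proof of Lemma 3.4: with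
`T₂₁ = (I−P)TP`, `Q ≥ I−P`, `P₁' = Q − (I−P)`, and the upper-triangular compression
`R = T₁₁P₁' + T₁₂ + T₂₂`, one has `‖R‖ ≤ 1 + ε₁`, `‖R − T‖₂ ≤ ε₁/δ + δ`, and
`S = (1+ε₁)⁻¹R` satisfies `‖S‖ ≤ 1`, `SP = PSP`, `‖S − T‖₂ ≤ ε₁ + ε₁/δ + δ`. -/
theorem stmt_19 {H : Type*} [NormedAddCommGroup H] [InnerProductSpace ℂ H] [CompleteSpace H]
    (M₁ : VonNeumannAlgebra H) (τ : (H →L[ℂ] H) → ℂ) (hτ : IsFiniteTrace M₁ τ)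
    (P : H →L[ℂ] H) (hP : P ∈ M₁) (hPproj : IsProjection P) (hPhalf : τ P = (1 : ℂ) / 2)
    (T : H →L[ℂ] H) (hT : T ∈ M₁) (hT1 : ‖T‖ ≤ 1)
    (δ ε₁ : ℝ) (hδ : 0 < δ) (hε₁ : 0 < ε₁)
    (h21 : norm2 τ ((1 - P) * T * P) < δ)
    (Q : H →L[ℂ] H) (hQ : Q ∈ M₁) (hQproj : IsProjection Q)
    (hQge : Q * (1 - P) = 1 - P)
    (hQnorm : ‖((1 - P) * T * P) * Q‖ ≤ ε₁)
    (hQtr : (τ (1 - Q)).re < ε₁ ^ 2 / δ ^ 2) :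
    ‖(P * T * P) * (Q - (1 - P)) + P * T * (1 - P) + (1 - P) * T * (1 - P)‖ ≤ 1 + ε₁ ∧
    norm2 τ (((P * T * P) * (Q - (1 - P)) + P * T * (1 - P) + (1 - P) * T * (1 - P)) - T)
      ≤ ε₁ / δ + δ ∧
    (‖(1 + ε₁)⁻¹ •
        ((P * T * P) * (Q - (1 - P)) + P * T * (1 - P) + (1 - P) * T * (1 - P))‖ ≤ 1 ∧
      ((1 + ε₁)⁻¹ •
          ((P * T * P) * (Q - (1 - P)) + P * T * (1 - P) + (1 - P) * T * (1 - P))) * P =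
        P * ((1 + ε₁)⁻¹ •
          ((P * T * P) * (Q - (1 - P)) + P * T * (1 - P) + (1 - P) * T * (1 - P))) * P ∧
      norm2 τ ((1 + ε₁)⁻¹ •
          ((P * T * P) * (Q - (1 - P)) + P * T * (1 - P) + (1 - P) * T * (1 - P)) - T)
        ≤ ε₁ + ε₁ / δ + δ) :=
  stmt_19_general M₁ τ hτ P hP hPproj T hT hT1 δ ε₁ hδ hε₁ h21 Q hQ hQproj hQge hQnorm hQtr
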